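/- Let π and π̃ := (1−α)π + α·Unif(A) be two policy sequences (mixed with the uniform policy with weight α ∈ (0,1/2)), and p̂, p̂' two kernel sequences. Then for all n, ‖μ_n^{π,p̂} − μ_n^{π̃,p̂'}‖₁ ≤ Σ_{i=0}^{n-1} Σ_{x,a} μ_i^{π,p̂}(x,a) ‖p̂_{i+1}(·|x,a) − p̂'_{i+1}(·|x,a)‖₁ + 2nα. -/

import Mathlib

/-! Each step of the forward recursion first pushes the state-action measure through the kernel
and then multiplies the resulting state distribution by the policy. In the kernel step the `L¹`
error grows by `∑_{x,a} μ(x,a) ‖p̂(·|x,a) - p̂'(·|x,a)‖₁`, the previous error being carried along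
unchanged because `p̂'` is stochastic. In the policy step it grows by at most
`∑_a |π(a|x) - π̃(a|x)| = α ∑_a |π(a|x) - 1/|A|| ≤ 2α`, averaged over a state distribution of mass
one. Summing over the `n` steps gives the bound. -/

open Finset

noncomputable section

variable {X A : Type*} [Fintype X] [Fintype A] [Nonempty A]

def IsDist {Y : Type*} [Fintype Y] (η : Y → ℝ) : Prop :=
  (∀ y, 0 ≤ η y) ∧ ∑ y, η y = 1

/-- Occupancy measures: `occ μ0 p π n` is the state-action distribution `μ_n^{π,p}`. -/
def occ (μ0 : X × A → ℝ) (p : ℕ → X → A → X → ℝ) (π : ℕ → X → A → ℝ) :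
    ℕ → X × A → ℝ
  | 0 => μ0
  | n + 1 => fun y =>
      (∑ x, ∑ a, occ μ0 p π n (x, a) * p (n + 1) x a y.1) * π (n + 1) y.1 y.2

section

variable {X A : Type*} [Fintype X] [Fintype A]

def nextState (ν : X × A → ℝ) (P : X → A → X → ℝ) (x' : X) : ℝ :=
  ∑ x, ∑ a, ν (x, a) * P x a x'

def withPolicy (f : X → ℝ) (σ : X → A → ℝ) (y : X × A) : ℝ :=
  f y.1 * σ y.1 y.2

def mixUniform (α : ℝ) (σ : A → ℝ) (a : A) : ℝ :=
  (1 - α) * σ a + α / Fintype.card A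

theorem occ_succ (μ0 : X × A → ℝ) (p : ℕ → X → A → X → ℝ) (π : ℕ → X → A → ℝ) (n : ℕ) :
    occ μ0 p π (n + 1) = withPolicy (nextState (occ μ0 p π n) (p (n + 1))) (π (n + 1)) :=
  rfl

theorem IsDist.nextState {ν : X × A → ℝ} {P : X → A → X → ℝ} (hν : IsDist ν)
    (hP : ∀ x a, IsDist (P x a)) : IsDist (nextState ν P) := by
  refine ⟨fun x' => sum_nonneg fun x _ => sum_nonneg fun a _ =>
    mul_nonneg (hν.1 _) ((hP x a).1 x'), ?_⟩
  calc ∑ x', _root_.nextState ν P x' = ∑ x, ∑ a, ν (x, a) * ∑ x', P x a x' := by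
        simp only [_root_.nextState, mul_sum]
        rw [sum_comm]
        exact sum_congr rfl fun x _ => sum_comm
    _ = 1 := by simpa only [(hP _ _).2, mul_one, Fintype.sum_prod_type] using hν.2

theorem IsDist.withPolicy {f : X → ℝ} {σ : X → A → ℝ} (hf : IsDist f)
    (hσ : ∀ x, IsDist (σ x)) : IsDist (withPolicy f σ) := by
  refine ⟨fun y => mul_nonneg (hf.1 _) ((hσ _).1 _), ?_⟩
  simpa only [_root_.withPolicy, Fintype.sum_prod_type, ← mul_sum, (hσ _).2, mul_one] using hf.2

theorem occ_isDist {μ0 : X × A → ℝ} {p : ℕ → X → A → X → ℝ} {π : ℕ → X → A → ℝ}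
    (hμ0 : IsDist μ0) (hp : ∀ n x a, IsDist (p n x a)) (hπ : ∀ n x, IsDist (π n x)) :
    ∀ n, IsDist (occ μ0 p π n)
  | 0 => hμ0
  | n + 1 => ((occ_isDist hμ0 hp hπ n).nextState (hp (n + 1))).withPolicy (hπ (n + 1))

theorem abs_mul_sub_mul_le {a b c d : ℝ} (ha : 0 ≤ a) (hd : 0 ≤ d) :
    |a * b - c * d| ≤ a * |b - d| + |a - c| * d :=
  calc |a * b - c * d| = |a * (b - d) + (a - c) * d| := by ring_nf
    _ ≤ |a * (b - d)| + |(a - c) * d| := abs_add_le _ _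
    _ = a * |b - d| + |a - c| * d := by rw [abs_mul, abs_mul, abs_of_nonneg ha, abs_of_nonneg hd]

theorem sum_abs_nextState_sub_le {ν ν' : X × A → ℝ} {P P' : X → A → X → ℝ}
    (hν : ∀ y, 0 ≤ ν y) (hP' : ∀ x a, IsDist (P' x a)) :
    ∑ x', |nextState ν P x' - nextState ν' P' x'| ≤
      (∑ x, ∑ a, ν (x, a) * ∑ x', |P x a x' - P' x a x'|) + ∑ y, |ν y - ν' y| :=
  calc ∑ x', |nextState ν P x' - nextState ν' P' x'|
      ≤ ∑ x', ∑ y : X × A,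
          (ν y * |P y.1 y.2 x' - P' y.1 y.2 x'| + |ν y - ν' y| * P' y.1 y.2 x') := by
        refine sum_le_sum fun x' _ => ?_
        simp only [nextState, ← Fintype.sum_prod_type', ← sum_sub_distrib]
        exact (abs_sum_le_sum_abs _ _).trans
          (sum_le_sum fun y _ => abs_mul_sub_mul_le (hν y) ((hP' _ _).1 x'))
    _ = (∑ x, ∑ a, ν (x, a) * ∑ x', |P x a x' - P' x a x'|) + ∑ y, |ν y - ν' y| := by
        rw [sum_comm]
        simp only [sum_add_distrib, ← mul_sum, (hP' _ _).2, mul_one,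
          Fintype.sum_prod_type]

theorem sum_abs_withPolicy_sub_le {f g : X → ℝ} {σ σ' : X → A → ℝ} {ε : ℝ}
    (hσ : ∀ x, IsDist (σ x)) (hg : IsDist g) (hσσ' : ∀ x, ∑ a, |σ x a - σ' x a| ≤ ε) :
    ∑ y, |withPolicy f σ y - withPolicy g σ' y| ≤ ∑ x, |f x - g x| + ε :=
  calc ∑ y, |withPolicy f σ y - withPolicy g σ' y|
      ≤ ∑ x, ∑ a, (σ x a * |f x - g x| + |σ x a - σ' x a| * g x) := by
        rw [Fintype.sum_prod_type]
        gcongr with x _ a _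
        rw [withPolicy, withPolicy, mul_comm (f x), mul_comm (g x)]
        exact abs_mul_sub_mul_le ((hσ x).1 a) (hg.1 x)
    _ = ∑ x, (|f x - g x| + g x * ∑ a, |σ x a - σ' x a|) := by
        refine sum_congr rfl fun x _ => ?_
        rw [sum_add_distrib, ← sum_mul, (hσ x).2, one_mul, mul_sum]
        simp only [mul_comm (g x)]
    _ ≤ ∑ x, (|f x - g x| + g x * ε) := by
        gcongr with x
        exacts [hg.1 x, hσσ' x]
    _ = ∑ x, |f x - g x| + ε := by rw [sum_add_distrib, ← sum_mul, hg.2, one_mul]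

theorem IsDist.mixUniform [Nonempty A] {σ : A → ℝ} {α : ℝ} (hσ : IsDist σ) (hα0 : 0 ≤ α)
    (hα1 : α ≤ 1) : IsDist (mixUniform α σ) := by
  refine ⟨fun a => add_nonneg (mul_nonneg (by linarith) (hσ.1 a)) (by positivity), ?_⟩
  have hcard : (Fintype.card A : ℝ) ≠ 0 := by positivity
  simp only [_root_.mixUniform, sum_add_distrib, ← mul_sum, hσ.2, sum_const, card_univ,
    nsmul_eq_mul]
  field_simp
  ring

theorem sum_abs_sub_mixUniform_le [Nonempty A] {σ : A → ℝ} {α : ℝ} (hσ : IsDist σ)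
    (hα : 0 ≤ α) : ∑ a, |σ a - mixUniform α σ a| ≤ 2 * α := by
  have hcard : (Fintype.card A : ℝ) ≠ 0 := by positivity
  calc ∑ a, |σ a - mixUniform α σ a| = ∑ a, α * |σ a - 1 / Fintype.card A| := by
        refine sum_congr rfl fun a _ => ?_
        have hdiff : σ a - mixUniform α σ a = α * (σ a - 1 / Fintype.card A) := by
          rw [mixUniform]
          ring
        rw [hdiff, abs_mul, abs_of_nonneg hα]
    _ ≤ ∑ a, α * (σ a + 1 / Fintype.card A) := by
        gcongr with a
        exact (abs_sub _ _).trans (by rw [abs_of_nonneg (hσ.1 a), abs_of_nonneg (by positivity)])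
    _ = 2 * α := by
        rw [← mul_sum, sum_add_distrib, hσ.2, sum_const, card_univ, nsmul_eq_mul]
        field_simp
        ring

end

theorem occ_mixed_policy_bound_general (α : ℝ) (hα0 : 0 < α) (hα : α < 1 / 2)
    (μ0 : X × A → ℝ) (hμ0 : IsDist μ0)
    (p q : ℕ → X → A → X → ℝ)
    (hp : ∀ n x a, IsDist (p n x a)) (hq : ∀ n x a, IsDist (q n x a))
    (π : ℕ → X → A → ℝ) (hπ : ∀ n x, IsDist (π n x))
    (n : ℕ) :
    -- `π̃` is `π` mixed with the uniform policy with weight `α`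
    let πt : ℕ → X → A → ℝ := fun m x a =>
      (1 - α) * π m x a + α / (Fintype.card A : ℝ)
    ∑ y : X × A, |occ μ0 p π n y - occ μ0 q πt n y| ≤
      (∑ i ∈ range n, ∑ x, ∑ a,
          occ μ0 p π i (x, a) * ∑ x', |p (i + 1) x a x' - q (i + 1) x a x'|) +
        2 * n * α := by
  intro πt
  have hπt : ∀ m x, IsDist (πt m x) := fun m x => (hπ m x).mixUniform hα0.le (by linarith)
  induction n with
  | zero => simp [occ]
  | succ n ih =>
    calc ∑ y, |occ μ0 p π (n + 1) y - occ μ0 q πt (n + 1) y|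
        ≤ ∑ x', |nextState (occ μ0 p π n) (p (n + 1)) x' -
            nextState (occ μ0 q πt n) (q (n + 1)) x'| + 2 * α := by
          rw [occ_succ, occ_succ]
          exact sum_abs_withPolicy_sub_le (hπ (n + 1)) ((occ_isDist hμ0 hq hπt n).nextState (hq _))
            fun x => sum_abs_sub_mixUniform_le (hπ (n + 1) x) hα0.le
      _ ≤ (∑ x, ∑ a, occ μ0 p π n (x, a) * ∑ x', |p (n + 1) x a x' - q (n + 1) x a x'|) +
            ∑ y, |occ μ0 p π n y - occ μ0 q πt n y| + 2 * α := by
          gcongr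
          exact sum_abs_nextState_sub_le (occ_isDist hμ0 hp hπ n).1 (hq _)
      _ ≤ _ := by
          rw [sum_range_succ]
          push_cast
          linarith

/-- Bound on the L1 distance between occupancies of `π` under `p̂` and of the uniform-mixed
policy `π̃ = (1−α)π + α·Unif(A)` under `p̂'`. -/
theorem occ_mixed_policy_bound (N : ℕ) (α : ℝ) (hα0 : 0 < α) (hα : α < 1 / 2)
    (μ0 : X × A → ℝ) (hμ0 : IsDist μ0)
    (p q : ℕ → X → A → X → ℝ)
    (hp : ∀ n x a, IsDist (p n x a)) (hq : ∀ n x a, IsDist (q n x a))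
    (π : ℕ → X → A → ℝ) (hπ : ∀ n x, IsDist (π n x))
    (n : ℕ) (hn : n ≤ N) :
    -- `π̃` is `π` mixed with the uniform policy with weight `α`
    let πt : ℕ → X → A → ℝ := fun m x a =>
      (1 - α) * π m x a + α / (Fintype.card A : ℝ)
    ∑ y : X × A, |occ μ0 p π n y - occ μ0 q πt n y| ≤
      (∑ i ∈ range n, ∑ x, ∑ a,
          occ μ0 p π i (x, a) * ∑ x', |p (i + 1) x a x' - q (i + 1) x a x'|) +
        2 * n * α :=
  occ_mixed_policy_bound_general α hα0 hα μ0 hμ0 p q hp hq π hπ n
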